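/- For a positive integer n and parameters w, y, q with denominators nonzero: (q;q)_n/(yq;q)_n · ∑_{i=1}^n w^i y^{n-i} (yq;q)_{i-1}/(q;q)_i = ∑_{i=1}^n [n choose i]_q (-1)^{i-1} q^{binom(i+1,2) - in} (1 - (w;q)_i)/(1 - yq^i). -/

import Mathlib

noncomputable def qPoch (q a : ℝ) (n : ℕ) : ℝ := ∏ j ∈ Finset.range n, (1 - a * q ^ j)

noncomputable def qBinom (q : ℝ) (n r : ℕ) : ℝ :=
  if r ≤ n then qPoch q q n / (qPoch q q r * qPoch q q (n - r)) else 0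

/-!
Write `a(n, j) = [n, j]_q (-1)ʲ q^(binom(j + 1, 2) - jn)` (`qCoeff`); it is the coefficient of `xʲ`
in `Pₙ(x) = ∏_{k<n} (1 - x q⁻ᵏ)`. The right-hand side is `Fₙ h = ∑ⱼ a(n, j) hⱼ` (`qTransform`) for
`hᵢ = ((w;q)ᵢ - 1) / (1 - y qⁱ)`. Splitting `Pₙ₊₁(x) = (1 - x) Pₙ(x / q)` gives the expansion
`Fₙ((w;q)_•) = wⁿ`, and comparing `Pₙ₊₁(qx) = (1 - qx) Pₙ(x)` with `Pₙ₊₁(x) = Pₙ(x) (1 - x q⁻ⁿ)`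
gives `Fₙ₊₁((qⁱ - qⁿ⁺¹) hᵢ) = (1 - qⁿ⁺¹) Fₙ h`. As `(1 - y qⁱ) hᵢ = (w;q)ᵢ - 1`, these two facts
show that the right-hand side satisfies `(1 - y qⁿ⁺¹) Xₙ₊₁ = y (1 - qⁿ⁺¹) Xₙ + wⁿ⁺¹`, `X₀ = 0`,
a recursion the left-hand side visibly satisfies as well.
-/

open Finset

section QPochhammer

variable {q a : ℝ}

lemma qPoch_zero (q a : ℝ) : qPoch q a 0 = 1 := prod_range_zero _

lemma qPoch_succ (q a : ℝ) (n : ℕ) : qPoch q a (n + 1) = qPoch q a n * (1 - a * q ^ n) :=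
  prod_range_succ _ _

lemma qPoch_ne_zero {n : ℕ} (h : ∀ j < n, 1 - a * q ^ j ≠ 0) : qPoch q a n ≠ 0 :=
  prod_ne_zero_iff.2 fun j hj => h j (mem_range.1 hj)

lemma qPoch_ne_zero_of_le {m n : ℕ} (h : qPoch q a n ≠ 0) (hmn : m ≤ n) : qPoch q a m ≠ 0 :=
  ne_zero_of_dvd_ne_zero h (prod_dvd_prod_of_subset _ _ _ (range_subset_range.2 hmn))

lemma qPoch_self_succ (q : ℝ) (n : ℕ) :
    qPoch q q (n + 1) = qPoch q q n * (1 - q ^ (n + 1)) := by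
  rw [qPoch_succ, pow_succ']

lemma one_sub_pow_ne_zero_of_qPoch {n j : ℕ} (h : qPoch q q n ≠ 0) (hj : j < n) :
    1 - q ^ (j + 1) ≠ 0 :=
  right_ne_zero_of_mul (qPoch_self_succ q j ▸ qPoch_ne_zero_of_le h hj)

end QPochhammer

section QBinomial

variable {q : ℝ} {n : ℕ}

lemma qBinom_of_lt {r : ℕ} (h : n < r) : qBinom q n r = 0 := if_neg h.not_ge

lemma qBinom_zero_right (hn : qPoch q q n ≠ 0) : qBinom q n 0 = 1 := by
  rw [qBinom, if_pos n.zero_le, qPoch_zero, one_mul, Nat.sub_zero, div_self hn]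

lemma qBinom_self (hn : qPoch q q n ≠ 0) : qBinom q n n = 1 := by
  rw [qBinom, if_pos le_rfl, Nat.sub_self, qPoch_zero, mul_one, div_self hn]

lemma qBinom_succ_succ (hn : qPoch q q (n + 1) ≠ 0) (j : ℕ) :
    qBinom q (n + 1) (j + 1) = qBinom q n (j + 1) + q ^ (n - j) * qBinom q n j := by
  rcases lt_trichotomy j n with hj | rfl | hj
  · obtain ⟨m, rfl⟩ := Nat.exists_eq_add_of_lt hj
    have hj0 := qPoch_ne_zero_of_le hn (by omega : j ≤ j + m + 1 + 1)
    have hm0 := qPoch_ne_zero_of_le hn (by omega : m ≤ j + m + 1 + 1)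
    have hj1 := one_sub_pow_ne_zero_of_qPoch hn (by omega : j < j + m + 1 + 1)
    have hm1 := one_sub_pow_ne_zero_of_qPoch hn (by omega : m < j + m + 1 + 1)
    simp only [qBinom, if_pos (by omega : j + 1 ≤ j + m + 1 + 1),
      if_pos (by omega : j + 1 ≤ j + m + 1), if_pos (by omega : j ≤ j + m + 1),
      show j + m + 1 + 1 - (j + 1) = m + 1 by omega, show j + m + 1 - (j + 1) = m by omega,
      show j + m + 1 - j = m + 1 by omega, qPoch_self_succ]
    field_simp
    ring
  · rw [qBinom_self hn, qBinom_self (qPoch_ne_zero_of_le hn j.le_succ),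
      qBinom_of_lt j.lt_succ_self, Nat.sub_self]
    ring
  · simp [qBinom_of_lt hj, qBinom_of_lt (Nat.succ_lt_succ hj),
      qBinom_of_lt (hj.trans j.lt_succ_self)]

lemma qBinom_succ_mul (hn : qPoch q q (n + 1) ≠ 0) (j : ℕ) :
    qBinom q (n + 1) j * (1 - q ^ (n + 1 - j)) = (1 - q ^ (n + 1)) * qBinom q n j := by
  rcases le_or_gt j n with hj | hj
  · obtain ⟨m, rfl⟩ := Nat.exists_eq_add_of_le hj
    have hj0 := qPoch_ne_zero_of_le hn (by omega : j ≤ j + m + 1)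
    have hm0 := qPoch_ne_zero_of_le hn (by omega : m ≤ j + m + 1)
    have hm1 := one_sub_pow_ne_zero_of_qPoch hn (by omega : m < j + m + 1)
    simp only [qBinom, if_pos (by omega : j ≤ j + m + 1), if_pos (by omega : j ≤ j + m),
      show j + m + 1 - j = m + 1 by omega, show j + m - j = m by omega, qPoch_self_succ]
    field_simp
  · simp [qBinom_of_lt hj, Nat.sub_eq_zero_of_le hj]

end QBinomial

section QCoeff

variable {q : ℝ} {n : ℕ}

def qCoeffExp (n j : ℕ) : ℤ := ((j * (j + 1) / 2 : ℕ) : ℤ) - (j : ℤ) * n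

lemma qCoeffExp_succ_left (n j : ℕ) : qCoeffExp (n + 1) j = qCoeffExp n j - j := by
  rw [qCoeffExp, qCoeffExp]
  push_cast
  ring

lemma qCoeffExp_succ_right (n j : ℕ) : qCoeffExp n (j + 1) = qCoeffExp n j + (j + 1) - n := by
  rw [qCoeffExp, qCoeffExp, show (j + 1) * (j + 1 + 1) = j * (j + 1) + 2 * (j + 1) by ring,
    Nat.add_mul_div_left _ _ two_pos]
  push_cast
  ring

noncomputable def qCoeff (q : ℝ) (n j : ℕ) : ℝ := qBinom q n j * (-1) ^ j * q ^ qCoeffExp n j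

lemma qCoeff_zero_right (hn : qPoch q q n ≠ 0) : qCoeff q n 0 = 1 := by
  simp [qCoeff, qCoeffExp, qBinom_zero_right hn]

lemma qCoeff_of_lt {j : ℕ} (h : n < j) : qCoeff q n j = 0 := by
  simp [qCoeff, qBinom_of_lt h]

lemma qCoeff_succ_succ (hq : q ≠ 0) (hn : qPoch q q (n + 1) ≠ 0) (j : ℕ) :
    q ^ (j + 1) * qCoeff q (n + 1) (j + 1) = qCoeff q n (j + 1) - q * qCoeff q n j := by
  rcases le_or_gt j n with hj | hj
  · simp only [qCoeff, qBinom_succ_succ hn, qCoeffExp_succ_left, qCoeffExp_succ_right,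
      zpow_sub₀ hq, zpow_add₀ hq, zpow_natCast, zpow_one, ← pow_sub_mul_pow q hj]
    field_simp
    ring
  · simp [qCoeff_of_lt hj, qCoeff_of_lt (hj.trans j.lt_succ_self),
      qCoeff_of_lt (Nat.succ_lt_succ hj)]

lemma qCoeff_succ_mul (hq : q ≠ 0) (hn : qPoch q q (n + 1) ≠ 0) (j : ℕ) :
    qCoeff q (n + 1) j * (q ^ j - q ^ (n + 1)) = (1 - q ^ (n + 1)) * qCoeff q n j := by
  rcases le_or_gt j (n + 1) with hj | hj
  · have h := qBinom_succ_mul hn j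
    simp only [qCoeff, qCoeffExp_succ_left, zpow_sub₀ hq, zpow_natCast]
    rw [← pow_sub_mul_pow q hj] at h ⊢
    field_simp
    linear_combination h
  · simp [qCoeff_of_lt hj, qCoeff_of_lt (Nat.lt_of_succ_lt hj)]

end QCoeff

section QTransform

variable {q : ℝ} {n : ℕ}

noncomputable def qTransform (q : ℝ) (n : ℕ) (h : ℕ → ℝ) : ℝ :=
  ∑ i ∈ range (n + 1), qCoeff q n i * h i

lemma qTransform_sub (f h : ℕ → ℝ) :
    qTransform q n (fun i => f i - h i) = qTransform q n f - qTransform q n h := by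
  simp only [qTransform, mul_sub, sum_sub_distrib]

lemma qTransform_const_mul (c : ℝ) (h : ℕ → ℝ) :
    qTransform q n (fun i => c * h i) = c * qTransform q n h := by
  simp only [qTransform, mul_sum, mul_left_comm]

lemma qTransform_eq_add_sum (hn : qPoch q q n ≠ 0) {m : ℕ} (hm : n ≤ m) (h : ℕ → ℝ) :
    qTransform q n h = h 0 + ∑ j ∈ range m, qCoeff q n (j + 1) * h (j + 1) := by
  have hsub : range (n + 1) ⊆ range (m + 1) := range_subset_range.2 (Nat.succ_le_succ hm)
  rw [qTransform, sum_subset hsub fun i _ hi => by rw [qCoeff_of_lt (by simpa using hi), zero_mul],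
    sum_range_succ', qCoeff_zero_right hn, one_mul, add_comm]

lemma qTransform_succ (hq : q ≠ 0) (hn : qPoch q q (n + 1) ≠ 0) (h : ℕ → ℝ) :
    qTransform q (n + 1) h =
      qTransform q n (fun i => h i / q ^ i) - qTransform q n (fun j => h (j + 1) / q ^ j) := by
  rw [qTransform_eq_add_sum hn le_rfl, qTransform_eq_add_sum (qPoch_ne_zero_of_le hn n.le_succ)
    n.le_succ, qTransform, pow_zero, div_one, add_sub_assoc, ← sum_sub_distrib]
  congr 1
  refine sum_congr rfl fun j _ => ?_
  field_simp
  linear_combination h (j + 1) * q ^ j * qCoeff_succ_succ hq hn j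

lemma qTransform_succ_pow_sub_pow_mul (hq : q ≠ 0) (hn : qPoch q q (n + 1) ≠ 0)
    (h : ℕ → ℝ) :
    qTransform q (n + 1) (fun i => (q ^ i - q ^ (n + 1)) * h i) =
      (1 - q ^ (n + 1)) * qTransform q n h := by
  rw [qTransform, sum_range_succ, sub_self, zero_mul, mul_zero, add_zero, qTransform, mul_sum]
  refine sum_congr rfl fun j _ => ?_
  rw [← mul_assoc, qCoeff_succ_mul hq hn, mul_assoc]

theorem qTransform_qPoch (hq : q ≠ 0) (hn : qPoch q q n ≠ 0) (w : ℝ) :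
    qTransform q n (qPoch q w) = w ^ n := by
  induction n with
  | zero => simp [qTransform, qCoeff_zero_right hn, qPoch_zero]
  | succ n ih =>
    rw [qTransform_succ hq hn, ← qTransform_sub, pow_succ',
      ← ih (qPoch_ne_zero_of_le hn n.le_succ), ← qTransform_const_mul]
    congr 1
    funext i
    rw [qPoch_succ]
    field_simp
    ring

lemma qTransform_succ_of_mul_eq (hq : q ≠ 0) (hn : qPoch q q (n + 1) ≠ 0) {w y : ℝ}
    {g : ℕ → ℝ} (hg : ∀ i, (1 - y * q ^ i) * g i = qPoch q w i - 1) :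
    (1 - y * q ^ (n + 1)) * qTransform q (n + 1) g =
      y * (1 - q ^ (n + 1)) * qTransform q n g + w ^ (n + 1) := by
  have hw : qTransform q (n + 1) (fun i => (1 - y * q ^ i) * g i) = w ^ (n + 1) := by
    have hu : (fun i => (1 - y * q ^ i) * g i) = fun i => qPoch q w i - qPoch q 0 i :=
      funext fun i => by simp [hg, qPoch]
    rw [hu, qTransform_sub, qTransform_qPoch hq hn, qTransform_qPoch hq hn,
      zero_pow n.succ_ne_zero, sub_zero]
  have hsplit : qTransform q (n + 1) (fun i => (1 - y * q ^ (n + 1)) * g i) -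
      qTransform q (n + 1) (fun i => (1 - y * q ^ i) * g i) =
        y * qTransform q (n + 1) (fun i => (q ^ i - q ^ (n + 1)) * g i) := by
    rw [← qTransform_sub, ← qTransform_const_mul]
    congr 1
    funext i
    ring
  rw [qTransform_const_mul, hw, qTransform_succ_pow_sub_pow_mul hq hn] at hsplit
  linear_combination hsplit

end QTransform

section LeftHandSide

noncomputable def fuLascouxLhs (q w y : ℝ) (n : ℕ) : ℝ :=
  qPoch q q n / qPoch q (y * q) n *
    ∑ i ∈ Icc 1 n, w ^ i * y ^ (n - i) * qPoch q (y * q) (i - 1) / qPoch q q i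

variable {q w y : ℝ} {n : ℕ}

lemma sum_Icc_succ_pow_mul_pow (q w y : ℝ) (n : ℕ) :
    ∑ i ∈ Icc 1 (n + 1), w ^ i * y ^ (n + 1 - i) * qPoch q (y * q) (i - 1) / qPoch q q i =
      y * ∑ i ∈ Icc 1 n, w ^ i * y ^ (n - i) * qPoch q (y * q) (i - 1) / qPoch q q i +
        w ^ (n + 1) * qPoch q (y * q) n / qPoch q q (n + 1) := by
  rw [sum_Icc_succ_top (by omega), Nat.sub_self, Nat.add_sub_cancel, pow_zero, mul_one, mul_sum]
  congr 1
  refine sum_congr rfl fun i hi => ?_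
  rw [show n + 1 - i = n - i + 1 by have := (mem_Icc.1 hi).2; omega, pow_succ]
  ring

lemma fuLascouxLhs_succ (hq1 : qPoch q q (n + 1) ≠ 0) (hy1 : qPoch q (y * q) (n + 1) ≠ 0) :
    (1 - y * q ^ (n + 1)) * fuLascouxLhs q w y (n + 1) =
      y * (1 - q ^ (n + 1)) * fuLascouxLhs q w y n + w ^ (n + 1) := by
  rw [qPoch_self_succ] at hq1
  rw [qPoch_succ q (y * q), mul_assoc, ← pow_succ'] at hy1
  rw [fuLascouxLhs, fuLascouxLhs, sum_Icc_succ_pow_mul_pow, qPoch_self_succ, qPoch_succ q (y * q),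
    mul_assoc y q, ← pow_succ']
  have hq0 := left_ne_zero_of_mul hq1
  have hqn := right_ne_zero_of_mul hq1
  have hy0 := left_ne_zero_of_mul hy1
  have hyn := right_ne_zero_of_mul hy1
  field_simp

lemma fuLascouxLhs_eq_qTransform (hq : q ≠ 0) (hq1 : ∀ m, qPoch q q m ≠ 0)
    (hy : ∀ j, 1 - y * q ^ (j + 1) ≠ 0) (n : ℕ) :
    fuLascouxLhs q w y n = qTransform q n (fun i => (qPoch q w i - 1) / (1 - y * q ^ i)) := by
  have hy1 (m : ℕ) : qPoch q (y * q) m ≠ 0 := qPoch_ne_zero fun j _ => by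
    simpa [mul_assoc, ← pow_succ'] using hy j
  have hg : ∀ i, (1 - y * q ^ i) * ((qPoch q w i - 1) / (1 - y * q ^ i)) = qPoch q w i - 1
    | 0 => by simp [qPoch_zero]
    | i + 1 => mul_div_cancel₀ _ (hy i)
  induction n with
  | zero => simp [fuLascouxLhs, qTransform, qCoeff_zero_right (hq1 0), qPoch_zero]
  | succ n ih =>
    refine mul_left_cancel₀ (hy n) ?_
    rw [fuLascouxLhs_succ (hq1 _) (hy1 _), ih, qTransform_succ_of_mul_eq hq (hq1 _) hg]

end LeftHandSide

lemma sum_Icc_qBinom_eq_qTransform (q w y : ℝ) (n : ℕ) :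
    ∑ i ∈ Icc 1 n, qBinom q n i * (-1) ^ (i - 1) *
        q ^ (((i * (i + 1) / 2 : ℕ) : ℤ) - (i : ℤ) * n) * (1 - qPoch q w i) / (1 - y * q ^ i) =
      qTransform q n (fun i => (qPoch q w i - 1) / (1 - y * q ^ i)) := by
  rw [← Ico_add_one_right_eq_Icc, sum_Ico_eq_sum_range, Nat.add_sub_cancel, qTransform,
    sum_range_succ', qPoch_zero, sub_self, zero_div, mul_zero, add_zero]
  refine sum_congr rfl fun k _ => ?_
  rw [add_comm 1 k, Nat.add_sub_cancel, qCoeff, qCoeffExp, pow_succ (-1 : ℝ) k]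
  ring

theorem fu_lascoux_35_general (q w y : ℝ) (n : ℕ) (hq : q ≠ 0)
    (hden1 : ∀ j : ℕ, 1 ≤ j → 1 - q ^ j ≠ 0)
    (hden2 : ∀ j : ℕ, 1 ≤ j → 1 - y * q ^ j ≠ 0) :
    qPoch q q n / qPoch q (y * q) n *
        ∑ i ∈ Finset.Icc 1 n, w ^ i * y ^ (n - i) * qPoch q (y * q) (i - 1) / qPoch q q i =
      ∑ i ∈ Finset.Icc 1 n,
        qBinom q n i * (-1) ^ (i - 1) * q ^ (((i * (i + 1) / 2 : ℕ) : ℤ) - (i : ℤ) * n) *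
          (1 - qPoch q w i) / (1 - y * q ^ i) := by
  have hq1 (m : ℕ) : qPoch q q m ≠ 0 := qPoch_ne_zero fun j _ => by
    simpa [← pow_succ'] using hden1 (j + 1) j.succ_pos
  rw [sum_Icc_qBinom_eq_qTransform]
  exact fuLascouxLhs_eq_qTransform hq hq1 (fun j => hden2 (j + 1) j.succ_pos) n

/-- The Fu–Lascoux identity (3.5). -/
theorem fu_lascoux_35 (q w y : ℝ) (n : ℕ) (hn : 0 < n) (hq : q ≠ 0)
    (hden1 : ∀ j : ℕ, 1 ≤ j → 1 - q ^ j ≠ 0)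
    (hden2 : ∀ j : ℕ, 1 ≤ j → 1 - y * q ^ j ≠ 0) :
    qPoch q q n / qPoch q (y * q) n *
        ∑ i ∈ Finset.Icc 1 n, w ^ i * y ^ (n - i) * qPoch q (y * q) (i - 1) / qPoch q q i =
      ∑ i ∈ Finset.Icc 1 n,
        qBinom q n i * (-1) ^ (i - 1) * q ^ (((i * (i + 1) / 2 : ℕ) : ℤ) - (i : ℤ) * n) *
          (1 - qPoch q w i) / (1 - y * q ^ i) :=
  fu_lascoux_35_general q w y n hq hden1 hden2
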